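/- arXiv:2208.06326 — 2 statements merged into one kernel-verified Lean document; each statement's English description precedes it below -/
import Mathlib

section
/- For any real p×p matrix A and any k ∈ [p], sup over v ∈ B₀(k) of ‖Av‖₂ is at most √(p/k) times sup over u, w ∈ B₀(k) of uᵀAw. -/
/-!
Let `M = sup_{u,w ∈ B₀(k)} uᵀAw` and `a = Av` with `v ∈ B₀(k)`. Testing `a` against its own
normalized restriction to a `k`-set `S` shows `∑_{i ∈ S} aᵢ² ≤ M²`. Summing over all `k`-subsets,
each coordinate is counted `C(p-1, k-1)` times out of `C(p, k)` subsets, and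
`p · C(p-1, k-1) = k · C(p, k)`, so `k ‖a‖² ≤ p M²`.
-/

open scoped BigOperators Matrix

/-- The Euclidean (ℓ₂) norm of a vector in ℝᵖ. -/
noncomputable def norm2 {p : ℕ} (v : Fin p → ℝ) : ℝ := Real.sqrt (∑ i, v i ^ 2)

/-- The `k`-sparse unit ball `B₀(k) = {v : ‖v‖₂ ≤ 1, ‖v‖₀ ≤ k}`. -/
def B0 (p k : ℕ) : Set (Fin p → ℝ) :=
  {v | norm2 v ≤ 1 ∧ Set.ncard {i | v i ≠ 0} ≤ k}

open Finset

theorem Finset.sum_powersetCard_sum {α M : Type*} [Fintype α] [DecidableEq α] [AddCommMonoid M]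
    (f : α → M) {k : ℕ} (hk : 1 ≤ k) :
    ∑ S ∈ univ.powersetCard k, ∑ i ∈ S, f i
      = (Fintype.card α - 1).choose (k - 1) • ∑ i, f i := by
  rw [sum_comm' (t' := univ) (s' := fun i => (univ.powersetCard k).filter ({i} ⊆ ·))
    (by simp), smul_sum]
  refine sum_congr rfl fun i _ => ?_
  rw [sum_const, card_filter_powersetCard_subset _ _ _ (subset_univ _) (by simpa using hk),
    card_singleton, card_univ]

theorem Finset.mul_sum_le_of_forall_powersetCard_sum_le {α : Type*} [Fintype α] [DecidableEq α]
    {f : α → ℝ} {k : ℕ} (hk : 1 ≤ k) (hkα : k ≤ Fintype.card α) {B : ℝ}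
    (hB : ∀ S : Finset α, #S = k → ∑ i ∈ S, f i ≤ B) :
    k * ∑ i, f i ≤ Fintype.card α * B := by
  set n := Fintype.card α
  have hsum : ((n - 1).choose (k - 1) : ℝ) * ∑ i, f i ≤ n.choose k * B := by
    calc ((n - 1).choose (k - 1) : ℝ) * ∑ i, f i
        = ∑ S ∈ univ.powersetCard k, ∑ i ∈ S, f i := by
          rw [sum_powersetCard_sum f hk, nsmul_eq_mul]
      _ ≤ ∑ _S ∈ univ.powersetCard k, B :=
          sum_le_sum fun S hS => hB S (mem_powersetCard.1 hS).2
      _ = n.choose k * B := by rw [sum_const, card_powersetCard, card_univ, nsmul_eq_mul]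
  have hchoose : (n : ℝ) * (n - 1).choose (k - 1) = n.choose k * k := by
    have := Nat.add_one_mul_choose_eq (n - 1) (k - 1)
    rw [Nat.sub_add_cancel (by omega), Nat.sub_add_cancel hk] at this
    exact_mod_cast this
  have hpos : (0 : ℝ) < (n - 1).choose (k - 1) := by
    exact_mod_cast Nat.choose_pos (by omega)
  refine le_of_mul_le_mul_left ?_ hpos
  calc ((n - 1).choose (k - 1) : ℝ) * (k * ∑ i, f i)
      = k * (((n - 1).choose (k - 1) : ℝ) * ∑ i, f i) := by ring
    _ ≤ k * (n.choose k * B) := by gcongr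
    _ = ((n - 1).choose (k - 1) : ℝ) * (n * B) := by linear_combination B * hchoose.symm

lemma Real.le_biSup_of_forall_le {ι : Type*} {s : Set ι} {f : ι → ℝ} {C : ℝ}
    (hC : ∀ i ∈ s, f i ≤ C) {i : ι} (hi : i ∈ s) : f i ≤ ⨆ j ∈ s, f j :=
  le_ciSup₂ (f := fun j (_ : j ∈ s) => f j) ⟨C, by simpa [upperBounds] using hC⟩ i hi

lemma Real.biSup_le_of_forall_le {ι : Type*} {s : Set ι} {f : ι → ℝ} {C : ℝ}
    (hC : ∀ i ∈ s, f i ≤ C) (hC0 : 0 ≤ C) : ⨆ i ∈ s, f i ≤ C :=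
  Real.iSup_le (fun i => Real.iSup_le (hC i) hC0) hC0

section SparseBall

variable {p k : ℕ}

lemma sum_sq_le_one_of_mem_B0 {v : Fin p → ℝ} (hv : v ∈ B0 p k) : ∑ i, v i ^ 2 ≤ 1 :=
  Real.sqrt_le_one.1 hv.1

lemma abs_le_one_of_mem_B0 {v : Fin p → ℝ} (hv : v ∈ B0 p k) (i : Fin p) : |v i| ≤ 1 := by
  rw [← sq_le_one_iff_abs_le_one]
  exact (single_le_sum (fun j _ => sq_nonneg (v j)) (mem_univ i)).trans
    (sum_sq_le_one_of_mem_B0 hv)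

lemma zero_mem_B0 : (0 : Fin p → ℝ) ∈ B0 p k := by
  simp [B0, norm2]

lemma dotProduct_mulVec_le_of_mem_B0 (A : Matrix (Fin p) (Fin p) ℝ) {u w : Fin p → ℝ}
    (hu : u ∈ B0 p k) (hw : w ∈ B0 p k) : u ⬝ᵥ A *ᵥ w ≤ ∑ i, ∑ j, |A i j| := by
  simp only [dotProduct, Matrix.mulVec, mul_sum]
  refine sum_le_sum fun i _ => sum_le_sum fun j _ => ?_
  calc u i * (A i j * w j) ≤ |u i| * (|A i j| * |w j|) := by
        rw [← abs_mul, ← abs_mul]; exact le_abs_self _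
    _ ≤ 1 * (|A i j| * 1) := by
        gcongr
        exacts [abs_le_one_of_mem_B0 hu i, abs_le_one_of_mem_B0 hw j]
    _ = |A i j| := by ring

lemma sum_sq_le_of_forall_dotProduct_le {a : Fin p → ℝ} {M : ℝ}
    (hM : ∀ u ∈ B0 p k, u ⬝ᵥ a ≤ M) {S : Finset (Fin p)} (hS : #S ≤ k) :
    ∑ i ∈ S, a i ^ 2 ≤ M ^ 2 := by
  set t := ∑ i ∈ S, a i ^ 2
  rcases (sum_nonneg fun i _ => sq_nonneg (a i) : 0 ≤ t).eq_or_lt with ht | ht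
  · exact ht.symm.le.trans (sq_nonneg M)
  set s := Real.sqrt t
  have hs : 0 < s := Real.sqrt_pos.2 ht
  have hs2 : s ^ 2 = t := Real.sq_sqrt ht.le
  set u : Fin p → ℝ := fun i => if i ∈ S then a i / s else 0
  have hu : u ∈ B0 p k := by
    refine ⟨?_, ?_⟩
    · have : ∑ i, u i ^ 2 = t / s ^ 2 := by
        simp only [u, ite_pow, div_pow, ne_eq, OfNat.ofNat_ne_zero, not_false_eq_true,
          zero_pow, sum_ite_mem, univ_inter, ← sum_div]
        rfl
      rw [norm2, this, hs2, div_self ht.ne', Real.sqrt_one]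
    · have hsupp : {i | u i ≠ 0} ⊆ (S : Set (Fin p)) := fun i hi => by
        by_contra hiS; exact hi (if_neg hiS)
      exact (Set.ncard_le_ncard hsupp S.finite_toSet).trans (by rwa [Set.ncard_coe_finset])
  have hua : u ⬝ᵥ a = s := by
    have : u ⬝ᵥ a = t / s := by
      simp only [u, dotProduct, ite_mul, zero_mul, sum_ite_mem, univ_inter, div_mul_eq_mul_div,
        ← sq, ← sum_div]
      rfl
    rw [this, ← hs2, sq, mul_div_cancel_right₀ _ hs.ne']
  rw [← hs2]
  exact pow_le_pow_left₀ hs.le (hua ▸ hM u hu) 2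

lemma norm2_le_of_forall_dotProduct_le (hk : 1 ≤ k) (hkp : k ≤ p) {a : Fin p → ℝ} {M : ℝ}
    (hM : ∀ u ∈ B0 p k, u ⬝ᵥ a ≤ M) :
    norm2 a ≤ Real.sqrt ((p : ℝ) / k) * M := by
  have hM0 : 0 ≤ M := by simpa using hM 0 zero_mem_B0
  have hblocks : (k : ℝ) * ∑ i, a i ^ 2 ≤ p * M ^ 2 := by
    simpa using mul_sum_le_of_forall_powersetCard_sum_le (f := fun i => a i ^ 2) hk
      (by simpa using hkp) fun S hS => sum_sq_le_of_forall_dotProduct_le hM hS.le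
  have hk0 : (0 : ℝ) < k := by exact_mod_cast hk
  calc norm2 a ≤ Real.sqrt ((p : ℝ) / k * M ^ 2) := by
        refine Real.sqrt_le_sqrt ?_
        rw [div_mul_eq_mul_div, le_div_iff₀ hk0]
        linarith
    _ = Real.sqrt ((p : ℝ) / k) * M := by
        rw [Real.sqrt_mul (by positivity), Real.sqrt_sq hM0]

end SparseBall

/-- For any real `p × p` matrix `A` and `k ∈ [p]`,
`sup_{v ∈ B₀(k)} ‖Av‖₂ ≤ √(p/k) · sup_{u,w ∈ B₀(k)} uᵀ A w`. -/
theorem stmt1 (p k : ℕ) (hk : 1 ≤ k) (hkp : k ≤ p)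
    (A : Matrix (Fin p) (Fin p) ℝ) :
    (⨆ v ∈ B0 p k, norm2 (A.mulVec v)) ≤
      Real.sqrt ((p : ℝ) / k) * ⨆ u ∈ B0 p k, ⨆ w ∈ B0 p k, u ⬝ᵥ A.mulVec w := by
  set M := ⨆ u ∈ B0 p k, ⨆ w ∈ B0 p k, u ⬝ᵥ A.mulVec w
  -- `∑ |Aᵢⱼ|` only bounds the suprema, so that they are not the junk value of `⨆` on `ℝ`.
  have hC0 : 0 ≤ ∑ i, ∑ j, |A i j| := by positivity
  have hM : ∀ u ∈ B0 p k, ∀ w ∈ B0 p k, u ⬝ᵥ A *ᵥ w ≤ M := fun u hu w hw =>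
    (Real.le_biSup_of_forall_le (fun w hw => dotProduct_mulVec_le_of_mem_B0 A hu hw) hw).trans <|
      Real.le_biSup_of_forall_le (fun u hu => Real.biSup_le_of_forall_le
        (fun w hw => dotProduct_mulVec_le_of_mem_B0 A hu hw) hC0) hu
  have hM0 : 0 ≤ M := by simpa using hM 0 zero_mem_B0 0 zero_mem_B0
  exact Real.biSup_le_of_forall_le
    (fun v hv => norm2_le_of_forall_dotProduct_le hk hkp fun u hu => hM u hu v hv)
    (mul_nonneg (Real.sqrt_nonneg _) hM0)
end

section
/- Let X ∈ ℝ^{n×p} have rows x₁ᵀ,…,x_nᵀ, and let A ∈ ℝ^{n×(n−p)} have orthonormal columns spanning the orthogonal complement of the column space of X (so AᵀA = I_{n−p} and AᵀX = 0). For 0 < t ≤ z ≤ n, define W_t := A_{(0,t]}ᵀ X_{(0,t]} − A_{(t,n]}ᵀ X_{(t,n]}, where the subscripts denote the submatrices of rows indexed by {1,…,t} and {t+1,…,n} respectively. If S_{a,b} := ∑_{i=a+1}^{b} x_i x_iᵀ and S_{0,n} = XᵀX is invertible, then W_tᵀ W_z = 4 S_{0,t} S_{0,n}^{−1} S_{z,n}.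 -/
/-!
Since `AᵀX = 0`, `W_s = 2 Aᵀ D_s X`, where `D_s` is the diagonal `0/1` matrix selecting the first
`s` rows. Hence `W_tᵀ W_z = 4 Xᵀ D_t (A Aᵀ) D_z X`; substituting `A Aᵀ = 1 - X (XᵀX)⁻¹ Xᵀ` and
`D_t D_z = D_t` gives `4 (S_{0,t} - S_{0,t} (XᵀX)⁻¹ Xᵀ D_z X)`, which is
`4 S_{0,t} (XᵀX)⁻¹ S_{z,n}` because `S_{z,n} = XᵀX - Xᵀ D_z X`.
-/

open Matrix
open scoped BigOperators

variable {ι m k l R : Type*} [CommRing R]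

def selectDiag [DecidableEq ι] (P : ι → Prop) [DecidablePred P] : Matrix ι ι R :=
  diagonal fun i => if P i then 1 else 0

section selectDiag

variable [DecidableEq ι] (P Q : ι → Prop) [DecidablePred P] [DecidablePred Q]

theorem sum_filter_vecMulVec [Fintype ι] (M : Matrix ι m R) (N : Matrix ι k R) :
    ∑ i ∈ Finset.univ.filter P, vecMulVec (M i) (N i)
      = Mᵀ * (selectDiag P : Matrix ι ι R) * N := by
  ext a b
  rw [mul_apply]
  simp only [selectDiag, mul_diagonal, transpose_apply]
  simp [Finset.sum_filter, vecMulVec_apply, Matrix.sum_apply]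

theorem transpose_selectDiag : (selectDiag P : Matrix ι ι R)ᵀ = selectDiag P :=
  diagonal_transpose _

theorem selectDiag_not : (selectDiag (fun i => ¬ P i) : Matrix ι ι R) = 1 - selectDiag P := by
  rw [selectDiag, selectDiag, ← diagonal_one, diagonal_sub]
  congr 1
  funext i
  split_ifs <;> simp

theorem selectDiag_mul_selectDiag_of_imp [Fintype ι] (h : ∀ i, P i → Q i) :
    (selectDiag P : Matrix ι ι R) * (selectDiag Q : Matrix ι ι R) = selectDiag P := by
  rw [selectDiag, selectDiag, diagonal_mul_diagonal]
  congr 1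
  funext i
  by_cases hP : P i <;> simp [hP, h i]

end selectDiag

section OrthogonalComplement

variable [Fintype m] [DecidableEq m] {X : Matrix m k R} {A : Matrix m l R}

theorem mul_mul_sub_mul_one_sub_mul (hAX : Aᵀ * X = 0) (D : Matrix m m R) :
    Aᵀ * D * X - Aᵀ * (1 - D) * X = (2 : R) • (Aᵀ * D * X) := by
  rw [Matrix.mul_sub, Matrix.mul_one, Matrix.sub_mul, hAX, zero_sub, sub_neg_eq_add, two_smul]

variable [Fintype k] [DecidableEq k] [Fintype l]

/- `X (XᵀX)⁻¹ Xᵀ = 1 - A Aᵀ` fixes the columns of `X` because `AᵀX = 0`. -/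
theorem mul_inv_gram_mul_gram (hAX : Aᵀ * X = 0)
    (hproj : A * Aᵀ = 1 - X * (Xᵀ * X)⁻¹ * Xᵀ) :
    X * (Xᵀ * X)⁻¹ * (Xᵀ * X) = X :=
  calc X * (Xᵀ * X)⁻¹ * (Xᵀ * X) = (1 - A * Aᵀ) * X := by
        rw [hproj, sub_sub_cancel]
        simp only [Matrix.mul_assoc]
    _ = X := by
        rw [Matrix.sub_mul, Matrix.mul_assoc, hAX, Matrix.mul_zero, Matrix.one_mul, sub_zero]

theorem transpose_mul_mul_eq_of_proj (hproj : A * Aᵀ = 1 - X * (Xᵀ * X)⁻¹ * Xᵀ)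
    {D E : Matrix m m R} (hD : Dᵀ = D) (hDE : D * E = D) :
    (Aᵀ * D * X)ᵀ * (Aᵀ * E * X) = Xᵀ * D * X - Xᵀ * D * X * (Xᵀ * X)⁻¹ * (Xᵀ * E * X) :=
  calc (Aᵀ * D * X)ᵀ * (Aᵀ * E * X) = Xᵀ * D * (A * Aᵀ) * E * X := by
        simp only [transpose_mul, transpose_transpose, hD, Matrix.mul_assoc]
    _ = _ := by
        rw [hproj, Matrix.mul_sub, Matrix.sub_mul, Matrix.sub_mul, Matrix.mul_one,
          Matrix.mul_assoc Xᵀ D E, hDE]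
        simp only [Matrix.mul_assoc]

theorem mul_inv_gram_mul_one_sub (hAX : Aᵀ * X = 0)
    (hproj : A * Aᵀ = 1 - X * (Xᵀ * X)⁻¹ * Xᵀ) (D E : Matrix m m R) :
    Xᵀ * D * X * (Xᵀ * X)⁻¹ * (Xᵀ * (1 - E) * X)
      = Xᵀ * D * X - Xᵀ * D * X * (Xᵀ * X)⁻¹ * (Xᵀ * E * X) := by
  rw [Matrix.mul_sub, Matrix.mul_one, Matrix.sub_mul, Matrix.mul_sub]
  congr 1
  rw [Matrix.mul_assoc (Xᵀ * D) X, Matrix.mul_assoc (Xᵀ * D), mul_inv_gram_mul_gram hAX hproj]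

end OrthogonalComplement

theorem stmt5_general (n p t z : ℕ) (htz : t ≤ z)
    (X : Matrix (Fin n) (Fin p) ℝ) (A : Matrix (Fin n) (Fin (n - p)) ℝ)
    (hAX : Aᵀ * X = 0)
    (hproj : A * Aᵀ = 1 - X * (Xᵀ * X)⁻¹ * Xᵀ) :
    (fun (W : ℕ → Matrix (Fin (n - p)) (Fin p) ℝ)
         (S : ℕ → ℕ → Matrix (Fin p) (Fin p) ℝ) =>
        (W t)ᵀ * W z = (4 : ℝ) • (S 0 t * (Xᵀ * X)⁻¹ * S z n))
      (fun s =>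
        (∑ i ∈ Finset.univ.filter (fun i : Fin n => (i : ℕ) < s),
            vecMulVec (A i) (X i)) -
          ∑ i ∈ Finset.univ.filter (fun i : Fin n => s ≤ (i : ℕ)),
            vecMulVec (A i) (X i))
      (fun a b =>
        ∑ i ∈ Finset.univ.filter (fun i : Fin n => a ≤ (i : ℕ) ∧ (i : ℕ) < b),
          vecMulVec (X i) (X i)) := by
  dsimp only
  simp only [zero_le, true_and, Fin.is_lt, and_true]
  simp only [← not_lt, sum_filter_vecMulVec, selectDiag_not, mul_mul_sub_mul_one_sub_mul hAX,
    transpose_smul, Matrix.smul_mul, Matrix.mul_smul, smul_smul]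
  rw [mul_inv_gram_mul_one_sub hAX hproj, transpose_mul_mul_eq_of_proj hproj
    (transpose_selectDiag _) (selectDiag_mul_selectDiag_of_imp _ _ fun i hi => hi.trans_le htz)]
  norm_num

/-- With `X ∈ ℝ^{n×p}`, `A ∈ ℝ^{n×(n-p)}` having orthonormal columns spanning the orthogonal
complement of the column space of `X` (`AᵀA = I`, `AᵀX = 0`, `AAᵀ = I - X(XᵀX)⁻¹Xᵀ`),
`S_{a,b} := ∑_{a < i ≤ b} x_i x_iᵀ`, and
`W_t := A_{(0,t]}ᵀ X_{(0,t]} - A_{(t,n]}ᵀ X_{(t,n]}`, one has, for `0 < t ≤ z ≤ n`,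
`W_tᵀ W_z = 4 S_{0,t} S_{0,n}⁻¹ S_{z,n}`. -/
theorem stmt5 (n p t z : ℕ) (hpn : p < n) (ht : 0 < t) (htz : t ≤ z) (hzn : z ≤ n)
    (X : Matrix (Fin n) (Fin p) ℝ) (A : Matrix (Fin n) (Fin (n - p)) ℝ)
    (hAA : Aᵀ * A = 1) (hAX : Aᵀ * X = 0)
    (hproj : A * Aᵀ = 1 - X * (Xᵀ * X)⁻¹ * Xᵀ)
    (hinv : IsUnit (Xᵀ * X).det) :
    (fun (W : ℕ → Matrix (Fin (n - p)) (Fin p) ℝ)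
         (S : ℕ → ℕ → Matrix (Fin p) (Fin p) ℝ) =>
        (W t)ᵀ * W z = (4 : ℝ) • (S 0 t * (Xᵀ * X)⁻¹ * S z n))
      (fun s =>
        (∑ i ∈ Finset.univ.filter (fun i : Fin n => (i : ℕ) < s),
            vecMulVec (A i) (X i)) -
          ∑ i ∈ Finset.univ.filter (fun i : Fin n => s ≤ (i : ℕ)),
            vecMulVec (A i) (X i))
      (fun a b =>
        ∑ i ∈ Finset.univ.filter (fun i : Fin n => a ≤ (i : ℕ) ∧ (i : ℕ) < b),
          vecMulVec (X i) (X i)) :=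
  stmt5_general n p t z htz X A hAX hproj
end
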